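/- As an identity of formal power series in q, 512q⁵P(q³)⁸X(−q³)⁵Φ(−q⁹)³ − 1216q⁵P(q³)⁷X(−q³)⁴Φ(−q⁹)⁴Ψ(q⁹) + 1280q⁵P(q³)⁶X(−q³)³Φ(−q⁹)⁵Ψ(q⁹)² − 640q⁵P(q³)⁵X(−q³)²Φ(−q⁹)⁶Ψ(q⁹)³ + 152q⁵P(q³)⁴X(−q³)Φ(−q⁹)⁷Ψ(q⁹)⁴ − 16q⁵P(q³)³Φ(−q⁹)⁸Ψ(q⁹)⁵ = 8·3²·q⁵·(q⁶;q⁶)_∞³ (q⁹;q⁹)_∞¹⁷ / ((q³;q³)_∞³ (q¹⁸;q¹⁸)_∞). -/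

import Mathlib

/-!
After the substitutions every factor is a quotient of the products `(q³;q³)_∞`, `(q⁶;q¹⁸)_∞`,
`(q¹²;q¹⁸)_∞`, `(q⁹;q¹⁸)_∞`, `(q¹⁸;q¹⁸)_∞`, using the dissections
`(q⁶;q⁶)_∞ = (q⁶;q¹⁸)_∞ (q¹²;q¹⁸)_∞ (q¹⁸;q¹⁸)_∞` and `(q⁹;q⁹)_∞ = (q⁹;q¹⁸)_∞ (q¹⁸;q¹⁸)_∞`.
Then `P(q³) X(-q³) = Φ(-q⁹) Ψ(q⁹) = (q⁹;q⁹)_∞ (q¹⁸;q¹⁸)_∞`, so all six monomials equal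
`q⁵ P(q³)³ Φ(-q⁹)³ ((q⁹;q⁹)_∞ (q¹⁸;q¹⁸)_∞)⁵`, which is the eta quotient on the right, and the
coefficients add up to `512 - 1216 + 1280 - 640 + 152 - 16 = 72`.

The product identities are checked modulo every `X ^ N`, where `(q^j;q^k)_∞` agrees with its
partial product of `N` factors.
-/

open PowerSeries

/-- The infinite product `(q^j; q^k)_∞ = ∏_{n ≥ 0} (1 - q^(j + k*n))` as a formal power
series over `ℤ`: for `j ≥ 1` its `n`-th coefficient is the (stable) `n`-th coefficient
of the partial products `∏_{m < n+1} (1 - q^(j + k*m))`. -/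
noncomputable def qp (j k : ℕ) : PowerSeries ℤ :=
  PowerSeries.mk fun n =>
    PowerSeries.coeff n
      (∏ m ∈ Finset.range (n + 1), (1 - (PowerSeries.X : PowerSeries ℤ) ^ (j + k * m)))

/-- Substitution of `q^k` for `q` in a formal power series (for `k ≥ 1`). -/
noncomputable def substQ (k : ℕ) (f : PowerSeries ℤ) : PowerSeries ℤ :=
  PowerSeries.mk fun n => if k ∣ n then PowerSeries.coeff (n / k) f else 0

/-- `Φ(-q) = (q;q)_∞² / (q²;q²)_∞`. -/
noncomputable def Phi : PowerSeries ℤ := qp 1 1 ^ 2 * Ring.inverse (qp 2 2)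

/-- `Ψ(q) = (q²;q²)_∞ / (q;q²)_∞`. -/
noncomputable def Psi : PowerSeries ℤ := qp 2 2 * Ring.inverse (qp 1 2)

/-- `P(q) = (q²;q⁶)_∞ (q⁴;q⁶)_∞ (q³;q³)_∞² / (q;q)_∞`. -/
noncomputable def Pq : PowerSeries ℤ := qp 2 6 * qp 4 6 * qp 3 3 ^ 2 * Ring.inverse (qp 1 1)

/-- `X(-q) = (q;q)_∞ (q⁶;q⁶)_∞² / ((q²;q²)_∞ (q³;q³)_∞)`. -/
noncomputable def Xq : PowerSeries ℤ := qp 1 1 * qp 6 6 ^ 2 * Ring.inverse (qp 2 2 * qp 3 3)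

/-- `Φ(-q³)` -/ noncomputable def Phi3 : PowerSeries ℤ := substQ 3 Phi
/-- `Φ(-q⁹)` -/ noncomputable def Phi9 : PowerSeries ℤ := substQ 9 Phi
/-- `Ψ(q³)` -/ noncomputable def Psi3 : PowerSeries ℤ := substQ 3 Psi
/-- `Ψ(q⁹)` -/ noncomputable def Psi9 : PowerSeries ℤ := substQ 9 Psi
/-- `P(q³)` -/ noncomputable def P3 : PowerSeries ℤ := substQ 3 Pq
/-- `X(-q³)` -/ noncomputable def X3 : PowerSeries ℤ := substQ 3 Xq


namespace Finset

theorem prod_range_mul_eq_prod_prod {M : Type*} [CommMonoid M] (f : ℕ → M) (m n : ℕ) :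
    ∏ i ∈ range (m * n), f i = ∏ r ∈ range m, ∏ q ∈ range n, f (r + m * q) := by
  induction n with
  | zero => simp
  | succ n ih =>
    rw [Nat.mul_succ, prod_range_add, ih, ← prod_mul_distrib]
    refine prod_congr rfl fun r _ => ?_
    rw [prod_range_succ, add_comm (m * n) r]

end Finset

theorem map_ringInverse {M N F : Type*} [MonoidWithZero M] [MonoidWithZero N] [FunLike F M N]
    [MonoidHomClass F M N] (f : F) {x : M} (hx : IsUnit x) :
    f (Ring.inverse x) = Ring.inverse (f x) := by
  obtain ⟨u, rfl⟩ := hx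
  rw [Ring.inverse_unit]
  exact (Units.coe_map_inv (f : M →* N) u).symm.trans (Ring.inverse_unit _).symm

namespace PowerSeries

open Finset

variable {R : Type*} [CommRing R]

theorem smodEq_X_pow_iff {f g : R⟦X⟧} {N : ℕ} :
    f ≡ g [SMOD Ideal.span {X ^ N}] ↔ ∀ n < N, coeff n f = coeff n g := by
  simp only [SModEq.sub_mem, Ideal.mem_span_singleton, X_pow_dvd_iff, map_sub, sub_eq_zero]

theorem eq_of_forall_smodEq {f g : R⟦X⟧} (h : ∀ N, f ≡ g [SMOD Ideal.span {X ^ N}]) : f = g :=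
  ext fun n => smodEq_X_pow_iff.mp (h (n + 1)) n n.lt_succ_self

theorem one_sub_X_pow_smodEq_one {N e : ℕ} (h : N ≤ e) :
    (1 - X ^ e : R⟦X⟧) ≡ 1 [SMOD Ideal.span {X ^ N}] := by
  rw [SModEq.sub_mem, Ideal.mem_span_singleton, sub_sub_cancel_left, dvd_neg]
  exact pow_dvd_pow X h

theorem prod_one_sub_X_pow_smodEq {j k M M' N : ℕ} (hM : M ≤ M') (hN : N ≤ j + k * M) :
    ∏ m ∈ range M', (1 - X ^ (j + k * m) : R⟦X⟧) ≡ ∏ m ∈ range M, (1 - X ^ (j + k * m))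
      [SMOD Ideal.span {X ^ N}] := by
  rw [← prod_range_mul_prod_Ico _ hM]
  conv_rhs => rw [← mul_one (∏ m ∈ range M, _)]
  refine SModEq.rfl.mul ?_
  simpa using SModEq.prod fun m hm => one_sub_X_pow_smodEq_one (R := R)
    (hN.trans (Nat.add_le_add_left (Nat.mul_le_mul_left k (mem_Ico.mp hm).1) j))

end PowerSeries

open Finset

theorem qp_smodEq_prod (j : ℕ) {k N M : ℕ} (hk : 0 < k) (hN : N ≤ M) :
    qp j k ≡ ∏ m ∈ range M, (1 - X ^ (j + k * m)) [SMOD Ideal.span {X ^ N}] := by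
  refine smodEq_X_pow_iff.mpr fun n hn => ?_
  rw [qp, coeff_mk]
  exact smodEq_X_pow_iff.mp (prod_one_sub_X_pow_smodEq (by omega)
    (le_add_left (Nat.le_mul_of_pos_left _ hk))).symm n n.lt_succ_self

theorem constantCoeff_qp {j : ℕ} (k : ℕ) (hj : 0 < j) : constantCoeff (qp j k) = 1 := by
  rw [← coeff_zero_eq_constantCoeff_apply, qp, coeff_mk]
  simp [hj.ne']

theorem isUnit_qp {j : ℕ} (k : ℕ) (hj : 0 < j) : IsUnit (qp j k) :=
  isUnit_iff_constantCoeff.mpr (by rw [constantCoeff_qp k hj]; exact isUnit_one)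

theorem qp_eq_prod_qp (j : ℕ) {k m : ℕ} (hk : 0 < k) (hm : 0 < m) :
    qp j k = ∏ r ∈ range m, qp (j + k * r) (m * k) := by
  refine eq_of_forall_smodEq fun N => ?_
  have h₁ := qp_smodEq_prod j hk (Nat.le_mul_of_pos_left N hm)
  have h₂ := SModEq.prod fun r (_ : r ∈ range m) =>
    qp_smodEq_prod (j + k * r) (Nat.mul_pos hm hk) (le_refl N)
  refine h₁.trans (SModEq.trans ?_ h₂.symm)
  have hexp (r q : ℕ) : j + k * (r + m * q) = j + k * r + m * k * q := by ring
  simp only [prod_range_mul_eq_prod_prod, hexp, SModEq.rfl]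

theorem expand_qp (j : ℕ) {k s : ℕ} (hk : 0 < k) (hs : s ≠ 0) :
    expand s hs (qp j k) = qp (s * j) (s * k) := by
  refine eq_of_forall_smodEq fun N => ?_
  have hprod : expand s hs (∏ m ∈ range N, (1 - X ^ (j + k * m) : ℤ⟦X⟧)) =
      ∏ m ∈ range N, (1 - X ^ (s * j + s * k * m)) := by
    simp only [map_prod, map_sub, map_one, map_pow, expand_X, ← pow_mul]
    refine prod_congr rfl fun m _ => by ring_nf
  have hs' : 0 < s := Nat.pos_of_ne_zero hs
  have h := qp_smodEq_prod j hk (le_refl N)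
  rw [SModEq.sub_mem, Ideal.mem_span_singleton] at h
  -- `expand` sends `X ^ N` to `X ^ (s * N)`, which is divisible by `X ^ N`
  have hmap : X ^ N ∣ expand s hs (qp j k) - ∏ m ∈ range N, (1 - X ^ (s * j + s * k * m)) := by
    rw [← hprod, ← map_sub]
    refine dvd_trans (pow_dvd_pow X (Nat.le_mul_of_pos_left N hs')) ?_
    simpa [pow_mul] using map_dvd (expand s hs) h
  refine SModEq.trans ?_ (qp_smodEq_prod (s * j) (Nat.mul_pos hs' hk) le_rfl).symm
  rwa [SModEq.sub_mem, Ideal.mem_span_singleton]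

theorem substQ_eq_expand {k : ℕ} (hk : k ≠ 0) (f : ℤ⟦X⟧) : substQ k f = expand k hk f := by
  ext n
  rw [substQ, coeff_mk, coeff_expand]

theorem P3_eq : P3 = qp 6 18 * qp 12 18 * qp 9 9 ^ 2 * Ring.inverse (qp 3 3) := by
  rw [P3, Pq, substQ_eq_expand three_ne_zero]
  simp only [map_mul, map_pow, Nat.reduceMul, map_ringInverse _ (isUnit_qp 1 one_pos),
    expand_qp _ (by norm_num : 0 < 6), expand_qp _ (by norm_num : 0 < 3),
    expand_qp _ (by norm_num : 0 < 1)]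

theorem X3_eq : X3 = qp 3 3 * qp 18 18 ^ 2 * Ring.inverse (qp 6 6 * qp 9 9) := by
  rw [X3, Xq, substQ_eq_expand three_ne_zero]
  simp only [map_mul, map_pow, Nat.reduceMul,
    map_ringInverse _ ((isUnit_qp 2 two_pos).mul (isUnit_qp 3 three_pos)),
    expand_qp _ (by norm_num : 0 < 6), expand_qp _ (by norm_num : 0 < 3),
    expand_qp _ (by norm_num : 0 < 2), expand_qp _ (by norm_num : 0 < 1)]

theorem Phi9_eq : Phi9 = qp 9 9 ^ 2 * Ring.inverse (qp 18 18) := by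
  rw [Phi9, Phi, substQ_eq_expand (by norm_num : 9 ≠ 0)]
  simp only [map_mul, map_pow, Nat.reduceMul, map_ringInverse _ (isUnit_qp 2 two_pos),
    expand_qp _ (by norm_num : 0 < 2), expand_qp _ (by norm_num : 0 < 1)]

theorem Psi9_eq : Psi9 = qp 18 18 * Ring.inverse (qp 9 18) := by
  rw [Psi9, Psi, substQ_eq_expand (by norm_num : 9 ≠ 0)]
  simp only [map_mul, Nat.reduceMul, map_ringInverse _ (isUnit_qp 2 one_pos),
    expand_qp _ (by norm_num : 0 < 2)]

theorem qp_nine_nine : qp 9 9 = qp 9 18 * qp 18 18 := by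
  simp [qp_eq_prod_qp 9 (by norm_num : 0 < 9) two_pos, prod_range, Fin.prod_univ_two]

theorem qp_six_six : qp 6 6 = qp 6 18 * qp 12 18 * qp 18 18 := by
  simp [qp_eq_prod_qp 6 (by norm_num : 0 < 6) three_pos, prod_range, Fin.prod_univ_three]

theorem algebraMap_ringInverse_qp {j : ℕ} (k : ℕ) (hj : 0 < j) :
    algebraMap ℤ⟦X⟧ (FractionRing ℤ⟦X⟧) (Ring.inverse (qp j k)) =
      (algebraMap ℤ⟦X⟧ (FractionRing ℤ⟦X⟧) (qp j k))⁻¹ := by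
  rw [map_ringInverse _ (isUnit_qp k hj), Ring.inverse_eq_inv]

theorem algebraMap_qp_ne_zero {j : ℕ} (k : ℕ) (hj : 0 < j) :
    algebraMap ℤ⟦X⟧ (FractionRing ℤ⟦X⟧) (qp j k) ≠ 0 :=
  ((isUnit_qp k hj).map _).ne_zero

theorem B_eval :
    512 * (PowerSeries.X : PowerSeries ℤ) ^ 5 * P3 ^ 8 * X3 ^ 5 * Phi9 ^ 3 - 1216 * (PowerSeries.X : PowerSeries ℤ) ^ 5 * P3 ^ 7 * X3 ^ 4 * Phi9 ^ 4 * Psi9 + 1280 * (PowerSeries.X : PowerSeries ℤ) ^ 5 * P3 ^ 6 * X3 ^ 3 * Phi9 ^ 5 * Psi9 ^ 2 - 640 * (PowerSeries.X : PowerSeries ℤ) ^ 5 * P3 ^ 5 * X3 ^ 2 * Phi9 ^ 6 * Psi9 ^ 3 + 152 * (PowerSeries.X : PowerSeries ℤ) ^ 5 * P3 ^ 4 * X3 * Phi9 ^ 7 * Psi9 ^ 4 - 16 * (PowerSeries.X : PowerSeries ℤ) ^ 5 * P3 ^ 3 * Phi9 ^ 8 * Psi9 ^ 5 = 8 * 3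 ^ 2 * (PowerSeries.X : PowerSeries ℤ) ^ 5 * (qp 6 6 ^ 3 * qp 9 9 ^ 17 * Ring.inverse (qp 3 3 ^ 3 * qp 18 18)) := by
  rw [P3_eq, X3_eq, Phi9_eq, Psi9_eq, qp_six_six, qp_nine_nine]
  apply IsFractionRing.injective ℤ⟦X⟧ (FractionRing ℤ⟦X⟧)
  simp (disch := norm_num) only [Ring.mul_inverse_rev, ← Ring.inverse_pow, map_sub, map_add,
    map_mul, map_pow, map_ofNat, algebraMap_ringInverse_qp]
  field_simp [algebraMap_qp_ne_zero]
  ring
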